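/- Let λ > 0 and f ≥ 0, and let u satisfy Δu + f(u) = 0 on an open set containing the annular region Σ = {p ∈ ℝ² : a < |p| < λ} (with 0 < a < λ). Define ψ(p) := u(p) − u(λ² p/|p|²) on Σ. Then ψ satisfies the differential inequality Δψ(p) + [f(u(p)) − f(u(λ²p/|p|²))] ≥ 0 on Σ. -/

import Mathlib

/-!
The inversion `K p = λ² p / |p|²` has derivative `(λ/|p|)²` times a reflection, so the
second-order chain rule gives `Δ(u ∘ K) = (λ/|p|)⁴ (Δu) ∘ K + Du(K p) (ΔK)`, and a direct
computation gives `ΔK(p) = (4 - 2n) λ² p / |p|⁴` in dimension `n`, which vanishes in the plane.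
Hence `Δψ(p) = Δu(p) - (λ/|p|)⁴ Δu(K p) = -f(u p) + (λ/|p|)⁴ f(u (K p))`, and
`(λ/|p|)⁴ ≥ 1` when `|p| < λ`.
-/

noncomputable abbrev E2 : Type := EuclideanSpace ℝ (Fin 2)

/-- The point of ℝ² with coordinates `x`, `y`. -/
noncomputable def pt (x y : ℝ) : E2 := (WithLp.equiv 2 (Fin 2 → ℝ)).symm ![x, y]

/-- The Laplacian of `u : ℝ² → ℝ`. -/
noncomputable def lap (u : E2 → ℝ) (x : E2) : ℝ :=
  ∑ i : Fin 2, fderiv ℝ (fun y => fderiv ℝ u y (EuclideanSpace.single i 1)) x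
    (EuclideanSpace.single i 1)

open InnerProductSpace Laplacian EuclideanGeometry
open scoped RealInnerProductSpace

section SecondDerivative

variable {𝕜 : Type*} [NontriviallyNormedField 𝕜]
  {E F G : Type*} [NormedAddCommGroup E] [NormedSpace 𝕜 E] [NormedAddCommGroup F] [NormedSpace 𝕜 F]
  [NormedAddCommGroup G] [NormedSpace 𝕜 G]

theorem fderiv_fderiv_apply {f : E → F} {x : E} (hf : DifferentiableAt 𝕜 (fderiv 𝕜 f) x)
    (v w : E) :
    fderiv 𝕜 (fderiv 𝕜 f) x v w = fderiv 𝕜 (fun y => fderiv 𝕜 f y w) x v := by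
  simp [fderiv_clm_apply hf (differentiableAt_const w)]

theorem iteratedFDeriv_two_comp_apply {u : F → G} {K : E → F} {p : E}
    (hu : ContDiffAt 𝕜 2 u (K p)) (hK : ContDiffAt 𝕜 2 K p) (v w : E) :
    iteratedFDeriv 𝕜 2 (u ∘ K) p ![v, w] =
      iteratedFDeriv 𝕜 2 u (K p) ![fderiv 𝕜 K p v, fderiv 𝕜 K p w] +
        fderiv 𝕜 u (K p) (iteratedFDeriv 𝕜 2 K p ![v, w]) := by
  have hu' : ∀ᶠ y in nhds p, DifferentiableAt 𝕜 u (K y) :=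
    (hK.continuousAt.eventually (hu.eventually (by simp))).mono
      fun _ h => h.differentiableAt (by simp)
  have hK' : ∀ᶠ y in nhds p, DifferentiableAt 𝕜 K y :=
    (hK.eventually (by simp)).mono fun _ h => h.differentiableAt (by simp)
  have hcomp : fderiv 𝕜 (u ∘ K) =ᶠ[nhds p] fun y => (fderiv 𝕜 u (K y)).comp (fderiv 𝕜 K y) := by
    filter_upwards [hu', hK'] with y huy hKy
    exact fderiv_comp y huy hKy
  have hDu : HasFDerivAt (fun y => fderiv 𝕜 u (K y))
      ((fderiv 𝕜 (fderiv 𝕜 u) (K p)).comp (fderiv 𝕜 K p)) p :=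
    ((hu.fderiv_right (m := 1) le_rfl).differentiableAt one_ne_zero).hasFDerivAt.comp p
      (hK.differentiableAt (by simp)).hasFDerivAt
  have hDK : HasFDerivAt (fderiv 𝕜 K) (fderiv 𝕜 (fderiv 𝕜 K) p) p :=
    ((hK.fderiv_right (m := 1) le_rfl).differentiableAt one_ne_zero).hasFDerivAt
  rw [iteratedFDeriv_two_apply, iteratedFDeriv_two_apply, iteratedFDeriv_two_apply,
    hcomp.fderiv_eq, (hDu.clm_comp hDK).fderiv]
  simp [add_comm]

end SecondDerivative

section Laplacian

variable {E F G : Type*} [NormedAddCommGroup E] [InnerProductSpace ℝ E] [FiniteDimensional ℝ E]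
  [NormedAddCommGroup F] [InnerProductSpace ℝ F] [FiniteDimensional ℝ F]
  [NormedAddCommGroup G] [NormedSpace ℝ G]

theorem laplacian_comp_of_fderiv_eq_smul_linearIsometryEquiv {u : F → G} {K : E → F} {p : E}
    (hu : ContDiffAt ℝ 2 u (K p)) (hK : ContDiffAt ℝ 2 K p) {c : ℝ} {L : E ≃ₗᵢ[ℝ] F}
    (hDK : fderiv ℝ K p = c • (L : E →L[ℝ] F)) :
    Δ (u ∘ K) p = c ^ 2 • Δ u (K p) + fderiv ℝ u (K p) (Δ K p) := by
  let b := stdOrthonormalBasis ℝ E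
  rw [laplacian_eq_iteratedFDeriv_orthonormalBasis _ b,
    laplacian_eq_iteratedFDeriv_orthonormalBasis K b,
    laplacian_eq_iteratedFDeriv_orthonormalBasis u (b.map L)]
  simp only [iteratedFDeriv_two_comp_apply hu hK, hDK, Finset.sum_add_distrib, map_sum,
    Finset.smul_sum, OrthonormalBasis.map_apply, iteratedFDeriv_two_apply]
  simp [smul_smul, sq]

theorem lap_eq_laplacian {u : E2 → ℝ} {x : E2} (hu : ContDiffAt ℝ 2 u x) : lap u x = Δ u x := by
  have hDu : DifferentiableAt ℝ (fderiv ℝ u) x :=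
    (hu.fderiv_right (m := 1) le_rfl).differentiableAt one_ne_zero
  simp [laplacian_eq_iteratedFDeriv_orthonormalBasis u (EuclideanSpace.basisFun (Fin 2) ℝ), lap,
    iteratedFDeriv_two_apply, fderiv_fderiv_apply hDu]

end Laplacian

section Inversion

variable {E G : Type*} [NormedAddCommGroup E] [InnerProductSpace ℝ E]
  [NormedAddCommGroup G] [NormedSpace ℝ G]

theorem inversion_zero_apply (R : ℝ) (y : E) : inversion (0 : E) R y = (R ^ 2 / ‖y‖ ^ 2) • y := by
  simp [inversion, div_pow]

theorem norm_inversion_zero (R : ℝ) (y : E) : ‖inversion (0 : E) R y‖ = R ^ 2 / ‖y‖ := by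
  simpa using dist_inversion_center (0 : E) y R

theorem contDiffAt_inversion_zero {n : ℕ∞} {R : ℝ} {p : E} (hp : p ≠ 0) :
    ContDiffAt ℝ n (inversion (0 : E) R) p :=
  contDiffAt_const.inversion contDiffAt_const contDiffAt_id hp

theorem fderiv_inversion_zero_apply {R : ℝ} {y : E} (hy : y ≠ 0) (v : E) :
    fderiv ℝ (inversion (0 : E) R) y v =
      (R ^ 2 * (‖y‖ ^ 2)⁻¹) • v - (2 * R ^ 2 * ⟪v, y⟫ * ((‖y‖ ^ 2)⁻¹) ^ 2) • y := by
  rw [(hasFDerivAt_inversion hy).fderiv, smul_apply, sub_zero, LinearIsometryEquiv.coe_coe'',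
    Submodule.reflection_orthogonal_apply, Submodule.reflection_apply,
    Submodule.starProjection_singleton, dist_zero_right, real_inner_comm]
  module

theorem iteratedFDeriv_two_inversion_zero_apply {R : ℝ} {p : E} (hp : p ≠ 0) (v : E) :
    iteratedFDeriv ℝ 2 (inversion (0 : E) R) p ![v, v] =
      (-4 * R ^ 2 * ⟪v, p⟫ * ((‖p‖ ^ 2)⁻¹) ^ 2) • v +
        (-2 * R ^ 2 * ‖v‖ ^ 2 * ((‖p‖ ^ 2)⁻¹) ^ 2 +
          8 * R ^ 2 * ⟪v, p⟫ ^ 2 * ((‖p‖ ^ 2)⁻¹) ^ 3) • p := by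
  have hev : (fun y => fderiv ℝ (inversion (0 : E) R) y v) =ᶠ[nhds p]
      fun y => (R ^ 2 * (‖y‖ ^ 2)⁻¹) • v - (2 * R ^ 2 * ⟪v, y⟫ * ((‖y‖ ^ 2)⁻¹) ^ 2) • y := by
    filter_upwards [isOpen_ne.mem_nhds hp] with y hy
    exact fderiv_inversion_zero_apply hy v
  have hsq : HasFDerivAt (fun y : E => ‖y‖ ^ 2) (2 • innerSL ℝ p) p := by
    simpa using (hasFDerivAt_id p).norm_sq
  have hinv := (hasDerivAt_inv (pow_ne_zero 2 (norm_ne_zero_iff.2 hp))).comp_hasFDerivAt p hsq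
  have hF : HasFDerivAt
      (fun y => (R ^ 2 * (‖y‖ ^ 2)⁻¹) • v - (2 * R ^ 2 * ⟪v, y⟫ * ((‖y‖ ^ 2)⁻¹) ^ 2) • y) _ p :=
    ((hinv.const_mul (R ^ 2)).smul_const v).sub
      ((((innerSL ℝ v).hasFDerivAt.const_mul (2 * R ^ 2)).mul (hinv.pow 2)).smul (hasFDerivAt_id p))
  rw [iteratedFDeriv_two_apply, Matrix.cons_val_zero, Matrix.cons_val_one, Matrix.cons_val_zero,
    fderiv_fderiv_apply (((contDiffAt_inversion_zero (n := 2) hp).fderiv_right (m := 1)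
      le_rfl).differentiableAt one_ne_zero),
    hev.fderiv_eq, hF.fderiv]
  simp only [sub_apply, add_apply, smul_apply, ContinuousLinearMap.smulRight_apply,
    ContinuousLinearMap.id_apply, coe_innerSL_apply, Function.comp_apply, Pi.mul_apply,
    real_inner_self_eq_norm_sq, real_inner_comm p v, smul_eq_mul, nsmul_eq_mul, Nat.add_one_sub_one]
  module

theorem laplacian_inversion_zero [FiniteDimensional ℝ E] {R : ℝ} {p : E} (hp : p ≠ 0) :
    Δ (inversion (0 : E) R) p =
      ((4 - 2 * Module.finrank ℝ E) * R ^ 2 * ((‖p‖ ^ 2)⁻¹) ^ 2) • p := by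
  let b := stdOrthonormalBasis ℝ E
  have hdim : ∑ i, ‖b i‖ ^ 2 = Module.finrank ℝ E := by
    simp [b.orthonormal.1]
  have hparseval : ∑ i, ⟪b i, p⟫ ^ 2 = ‖p‖ ^ 2 := by
    simpa [sq, real_inner_comm, real_inner_self_eq_norm_sq] using b.sum_inner_mul_inner p p
  have hfirst : ∑ i, (-4 * R ^ 2 * ⟪b i, p⟫ * ((‖p‖ ^ 2)⁻¹) ^ 2) • b i =
      (-4 * R ^ 2 * ((‖p‖ ^ 2)⁻¹) ^ 2) • p :=
    calc _ = (-4 * R ^ 2 * ((‖p‖ ^ 2)⁻¹) ^ 2) • ∑ i, ⟪b i, p⟫ • b i := by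
          rw [Finset.smul_sum]
          exact Finset.sum_congr rfl fun i _ => by module
      _ = _ := by rw [b.sum_repr' p]
  have hsecond : ∑ i, (-2 * R ^ 2 * ‖b i‖ ^ 2 * ((‖p‖ ^ 2)⁻¹) ^ 2 +
      8 * R ^ 2 * ⟪b i, p⟫ ^ 2 * ((‖p‖ ^ 2)⁻¹) ^ 3) =
      (8 - 2 * Module.finrank ℝ E) * R ^ 2 * ((‖p‖ ^ 2)⁻¹) ^ 2 := by
    simp only [Finset.sum_add_distrib, ← Finset.sum_mul, ← Finset.mul_sum, hdim, hparseval]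
    field_simp
    ring
  rw [laplacian_eq_iteratedFDeriv_orthonormalBasis _ b]
  simp only [iteratedFDeriv_two_inversion_zero_apply hp, Finset.sum_add_distrib, ← Finset.sum_smul,
    hfirst, hsecond]
  module

theorem laplacian_comp_inversion_zero [FiniteDimensional ℝ E] (hE : Module.finrank ℝ E = 2)
    {u : E → G} {R : ℝ} {p : E} (hp : p ≠ 0)
    (hu : ContDiffAt ℝ 2 u (inversion 0 R p)) :
    Δ (u ∘ inversion (0 : E) R) p = (R / ‖p‖) ^ 4 • Δ u (inversion 0 R p) := by
  have hDK : fderiv ℝ (inversion (0 : E) R) p =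
      (R / ‖p‖) ^ 2 • ((Submodule.span ℝ {p - 0})ᗮ.reflection : E →L[ℝ] E) := by
    rw [(hasFDerivAt_inversion hp).fderiv, dist_zero_right]
  rw [laplacian_comp_of_fderiv_eq_smul_linearIsometryEquiv hu
      (contDiffAt_inversion_zero hp) hDK,
    laplacian_inversion_zero hp, hE]
  norm_num [← pow_mul]

end Inversion

theorem stmt9 (a lam : ℝ) (ha : 0 < a) (halam : a < lam)
    (f : ℝ → ℝ) (hfpos : ∀ t, 0 ≤ f t)
    (U : Set E2) (hUo : IsOpen U)
    (hU : {p : E2 | a < ‖p‖ ∧ ‖p‖ < lam ^ 2 / a} ⊆ U)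
    (u : E2 → ℝ) (hureg : ContDiffOn ℝ 2 u U)
    (hueq : ∀ x ∈ U, lap u x + f (u x) = 0)
    (ψ : E2 → ℝ) (hψ : ∀ p : E2, ψ p = u p - u ((lam ^ 2 / ‖p‖ ^ 2) • p)) :
    ∀ p : E2, a < ‖p‖ → ‖p‖ < lam →
      0 ≤ lap ψ p + (f (u p) - f (u ((lam ^ 2 / ‖p‖ ^ 2) • p))) := by
  intro p hap hpl
  set K := inversion (0 : E2) lam
  have hnp : 0 < ‖p‖ := ha.trans hap
  have hp : p ≠ 0 := norm_pos_iff.1 hnp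
  have hlam_lt : lam < lam ^ 2 / ‖p‖ := by rw [lt_div_iff₀ hnp]; nlinarith
  have hKp_lt : lam ^ 2 / ‖p‖ < lam ^ 2 / a := div_lt_div_of_pos_left (by nlinarith) ha hap
  have hpU : p ∈ U := hU ⟨hap, hpl.trans (hlam_lt.trans hKp_lt)⟩
  have hKpU : K p ∈ U := hU (show a < ‖K p‖ ∧ ‖K p‖ < lam ^ 2 / a by
    rw [norm_inversion_zero]; exact ⟨halam.trans hlam_lt, hKp_lt⟩)
  have hC : ∀ q ∈ U, ContDiffAt ℝ 2 u q := fun q hq => hureg.contDiffAt (hUo.mem_nhds hq)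
  have hΔu : ∀ q ∈ U, Δ u q = -f (u q) := fun q hq => by
    linarith [hueq q hq, lap_eq_laplacian (hC q hq)]
  have hCK : ContDiffAt ℝ 2 (u ∘ K) p :=
    (hC _ hKpU).comp p (contDiffAt_inversion_zero hp)
  have hψK : ψ = u - u ∘ K := funext fun y => by simp [hψ, K, inversion_zero_apply]
  have hlapψ : lap ψ p = -f (u p) + (lam / ‖p‖) ^ 4 * f (u (K p)) := by
    rw [hψK, lap_eq_laplacian (u := u - u ∘ K) ((hC p hpU).sub hCK), (hC p hpU).laplacian_sub hCK,
      laplacian_comp_inversion_zero finrank_euclideanSpace_fin hp (hC _ hKpU), hΔu p hpU,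
      hΔu _ hKpU, smul_eq_mul]
    ring
  have hfactor : 1 ≤ (lam / ‖p‖) ^ 4 := one_le_pow₀ ((one_le_div hnp).2 hpl.le)
  rw [← inversion_zero_apply, hlapψ]
  nlinarith [hfpos (u (K p))]
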